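/- arXiv:2305.00203 — 6 statements merged into one kernel-verified Lean document; each statement's English description precedes it below -/
import Mathlib

section
/- Let n ≥ 1 and q ≥ 2 be integers, α ∈ {0,1}, γ ≥ 0, ρ > 0, φ > 0, let A₀ be a real symmetric positive definite n×n matrix, let A₁, …, A_q be real symmetric positive semidefinite n×n matrices, and let 1 ≤ k ≤ n. Let (x_l, y_l, z_l)_{l ≥ 0} be a BCD sequence with ‖z₀‖ ≤ 1. Then for every l ≥ 1, max{‖x_l‖, ‖y_l‖, ‖z_l‖} ≤ max{√(φ/λmin(A₀)), 1}, where λmin(A₀) denotes the smallest eigenvalue of A₀. -/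
open Matrix Finset Filter Topology

/-- Squared Euclidean norm on `ℝ^n`. -/
noncomputable def sqnorm {n : ℕ} (x : Fin n → ℝ) : ℝ := ∑ i, x i ^ 2

/-- Euclidean norm on `ℝ^n`. -/
noncomputable def euclNorm {n : ℕ} (x : Fin n → ℝ) : ℝ := Real.sqrt (sqnorm x)

/-- Quadratic form `xᵀ A x`. -/
noncomputable def qf {n : ℕ} (A : Matrix (Fin n) (Fin n) ℝ) (x : Fin n → ℝ) : ℝ :=
  x ⬝ᵥ A.mulVec x

/-- The penalized objective
`q_ρ(x,y,z) = α xᵀA₁x + γ Σ_{i=2}^{q} (zᵀA_i z)(xᵀA_i x) + ρ(‖x−y‖² + ‖x−z‖²)`. -/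
noncomputable def qrho {n : ℕ} (q : ℕ) (A : ℕ → Matrix (Fin n) (Fin n) ℝ)
    (α γ ρ : ℝ) (x y z : Fin n → ℝ) : ℝ :=
  α * qf (A 1) x + γ * ∑ i ∈ Finset.Icc 2 q, qf (A i) z * qf (A i) x
    + ρ * (sqnorm (x - y) + sqnorm (x - z))

/-- Smallest eigenvalue of a real matrix: the infimum of the set of `μ` such that
`A - μ I` is singular. -/
noncomputable def smallestEigenvalue {n : ℕ} (A : Matrix (Fin n) (Fin n) ℝ) : ℝ :=
  sInf {μ : ℝ | ¬ IsUnit (A - μ • (1 : Matrix (Fin n) (Fin n) ℝ))}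

/-- Largest eigenvalue of a real matrix: the supremum of the set of `μ` such that
`A - μ I` is singular. -/
noncomputable def largestEigenvalue {n : ℕ} (A : Matrix (Fin n) (Fin n) ℝ) : ℝ :=
  sSup {μ : ℝ | ¬ IsUnit (A - μ • (1 : Matrix (Fin n) (Fin n) ℝ))}

/-- Coordinate projection `x_L`: keeps the coordinates in `L`, zeroes the others. -/
noncomputable def proj {n : ℕ} (L : Finset (Fin n)) (x : Fin n → ℝ) : Fin n → ℝ :=
  fun i => if i ∈ L then x i else 0

/-! Every `y_l` is a unit vector, and the remaining iterates stay in the ball of radius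
`M = max (√(φ / λmin A₀)) 1`. If `x_{l+1}` left that ball while `y_l` and `z_l` lie in it,
shrinking `x_{l+1}` radially onto the sphere of radius `M` would keep it feasible
(`λmin A₀ · M² ≥ φ`), would not increase the positive semidefinite quadratic terms, and would
strictly decrease both distance terms, contradicting minimality. Shrinking `z_{l+1}` onto the
sphere of radius `‖x_{l+1}‖` in the same way shows `‖z_{l+1}‖ ≤ ‖x_{l+1}‖`, and the bound
follows by induction on `l`. -/

lemma norm_smul_sub_lt_norm_sub {E : Type*} [NormedAddCommGroup E] [InnerProductSpace ℝ E]
    {x v : E} {t : ℝ} (hx : x ≠ 0) (ht : t < 1) (hv : ‖v‖ ≤ t * ‖x‖) :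
    ‖t • x - v‖ < ‖x - v‖ := by
  have hx₀ : 0 < ‖x‖ := norm_pos_iff.2 hx
  have hinner : inner ℝ x v ≤ t * ‖x‖ ^ 2 := by
    calc inner ℝ x v ≤ ‖x‖ * ‖v‖ := real_inner_le_norm x v
      _ ≤ ‖x‖ * (t * ‖x‖) := mul_le_mul_of_nonneg_left hv hx₀.le
      _ = t * ‖x‖ ^ 2 := by ring
  -- `‖x - v‖² - ‖t • x - v‖² = (1 - t) ((1 + t) ‖x‖² - 2 ⟪x, v⟫)`, and the second factor is at
  -- least `(1 - t) ‖x‖²`.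
  have hsq : ‖t • x - v‖ ^ 2 < ‖x - v‖ ^ 2 := by
    rw [norm_sub_sq_real, norm_sub_sq_real, norm_smul, inner_smul_left, mul_pow, Real.norm_eq_abs,
      sq_abs, RCLike.conj_to_real]
    nlinarith [mul_pos (mul_pos (sub_pos.2 ht) (sub_pos.2 ht)) (pow_pos hx₀ 2)]
  exact lt_of_pow_lt_pow_left₀ 2 (norm_nonneg _) hsq

section SmallestEigenvalue

variable {n : ℕ} {A : Matrix (Fin n) (Fin n) ℝ}

lemma spectrum_eq_setOf_not_isUnit (A : Matrix (Fin n) (Fin n) ℝ) :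
    spectrum ℝ A = {μ : ℝ | ¬ IsUnit (A - μ • (1 : Matrix (Fin n) (Fin n) ℝ))} := by
  ext μ
  rw [spectrum.mem_iff, Algebra.algebraMap_eq_smul_one, ← IsUnit.neg_iff, neg_sub]
  rfl

lemma Matrix.IsHermitian.smallestEigenvalue_eq_sInf (hA : A.IsHermitian) :
    smallestEigenvalue A = sInf (Set.range hA.eigenvalues) := by
  rw [smallestEigenvalue, ← spectrum_eq_setOf_not_isUnit, hA.spectrum_real_eq_range_eigenvalues]

lemma Matrix.IsHermitian.smallestEigenvalue_mem [NeZero n]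
    (hA : A.IsHermitian) : smallestEigenvalue A ∈ Set.range hA.eigenvalues :=
  hA.smallestEigenvalue_eq_sInf ▸ (Set.range_nonempty _).csInf_mem (Set.finite_range _)

lemma Matrix.IsHermitian.smallestEigenvalue_le
    (hA : A.IsHermitian) (i : Fin n) : smallestEigenvalue A ≤ hA.eigenvalues i :=
  hA.smallestEigenvalue_eq_sInf ▸ csInf_le (Set.finite_range _).bddBelow ⟨i, rfl⟩

lemma Matrix.PosDef.smallestEigenvalue_pos [NeZero n]
    (hA : A.PosDef) : 0 < smallestEigenvalue A := by
  obtain ⟨i, hi⟩ := hA.isHermitian.smallestEigenvalue_mem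
  exact hi ▸ hA.eigenvalues_pos i

lemma Matrix.IsHermitian.posSemidef_sub_smallestEigenvalue
    (hA : A.IsHermitian) : (A - smallestEigenvalue A • 1).PosSemidef := by
  rw [posSemidef_iff_isHermitian_and_spectrum_nonneg]
  refine ⟨hA.sub (isHermitian_one.smul (.all _)), ?_⟩
  rw [← Algebra.algebraMap_eq_smul_one, ← spectrum.sub_singleton_eq]
  rintro _ ⟨μ, hμ, _, rfl, rfl⟩
  rw [hA.spectrum_real_eq_range_eigenvalues] at hμ
  obtain ⟨i, rfl⟩ := hμ
  exact sub_nonneg.2 (hA.smallestEigenvalue_le i)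

lemma Matrix.IsHermitian.smallestEigenvalue_mul_sqnorm_le
    (hA : A.IsHermitian) (v : Fin n → ℝ) : smallestEigenvalue A * sqnorm v ≤ qf A v := by
  have := hA.posSemidef_sub_smallestEigenvalue.dotProduct_mulVec_nonneg v
  simp only [sub_mulVec, smul_mulVec, one_mulVec, dotProduct_sub, dotProduct_smul] at this
  simpa [qf, sqnorm, dotProduct, pow_two] using this

end SmallestEigenvalue

section EuclideanCoordinates

variable {n : ℕ}

lemma sqnorm_eq_norm_sq (x : Fin n → ℝ) : sqnorm x = ‖WithLp.toLp 2 x‖ ^ 2 := by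
  simp [sqnorm, EuclideanSpace.real_norm_sq_eq]

lemma euclNorm_eq_norm (x : Fin n → ℝ) : euclNorm x = ‖WithLp.toLp 2 x‖ := by
  rw [euclNorm, sqnorm_eq_norm_sq, Real.sqrt_sq (norm_nonneg _)]

lemma sqnorm_sub_comm (x y : Fin n → ℝ) : sqnorm (x - y) = sqnorm (y - x) := by
  rw [sqnorm_eq_norm_sq, sqnorm_eq_norm_sq, WithLp.toLp_sub, WithLp.toLp_sub, norm_sub_rev]

lemma euclNorm_sq (x : Fin n → ℝ) : euclNorm x ^ 2 = sqnorm x :=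
  Real.sq_sqrt (sum_nonneg fun _ _ => sq_nonneg _)

lemma euclNorm_nonneg (x : Fin n → ℝ) : 0 ≤ euclNorm x := Real.sqrt_nonneg _

lemma ne_zero_of_euclNorm_pos {x : Fin n → ℝ} (hx : 0 < euclNorm x) : x ≠ 0 := by
  rintro rfl
  simp [euclNorm, sqnorm] at hx

lemma euclNorm_smul (t : ℝ) (x : Fin n → ℝ) : euclNorm (t • x) = |t| * euclNorm x := by
  simp only [euclNorm_eq_norm, WithLp.toLp_smul, norm_smul, Real.norm_eq_abs]

lemma sqnorm_smul_sub_lt {x v : Fin n → ℝ} {t : ℝ} (hx : x ≠ 0) (ht : t < 1)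
    (hv : euclNorm v ≤ t * euclNorm x) : sqnorm (t • x - v) < sqnorm (x - v) := by
  simp only [euclNorm_eq_norm] at hv
  simp only [sqnorm_eq_norm_sq, WithLp.toLp_sub, WithLp.toLp_smul]
  gcongr
  exact norm_smul_sub_lt_norm_sub (by simpa using hx) ht hv

lemma qf_smul (A : Matrix (Fin n) (Fin n) ℝ) (t : ℝ) (x : Fin n → ℝ) :
    qf A (t • x) = t ^ 2 * qf A x := by
  simp only [qf, mulVec_smul, smul_dotProduct, dotProduct_smul, smul_eq_mul]
  ring

lemma qf_smul_le {A : Matrix (Fin n) (Fin n) ℝ} (hA : A.PosSemidef) {t : ℝ} (ht : t ^ 2 ≤ 1)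
    (x : Fin n → ℝ) : qf A (t • x) ≤ qf A x := by
  rw [qf_smul]
  exact mul_le_of_le_one_left (hA.dotProduct_mulVec_nonneg x) ht

lemma Matrix.PosDef.le_qf_of_sqrt_div_le [NeZero n] {A : Matrix (Fin n) (Fin n) ℝ}
    (hA : A.PosDef) {φ : ℝ} {u : Fin n → ℝ}
    (hu : √(φ / smallestEigenvalue A) ≤ euclNorm u) :
    φ ≤ qf A u := by
  have h := (Real.sqrt_le_iff.1 hu).2
  rw [div_le_iff₀ hA.smallestEigenvalue_pos, euclNorm_sq] at h
  linarith [hA.isHermitian.smallestEigenvalue_mul_sqnorm_le u]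

end EuclideanCoordinates

section BlockSteps

variable {n q : ℕ} {A : ℕ → Matrix (Fin n) (Fin n) ℝ} {α γ ρ : ℝ}

lemma qrho_smul_left_lt (hα : 0 ≤ α) (hγ : 0 ≤ γ) (hρ : 0 < ρ) (hA₁ : (A 1).PosSemidef)
    (hA : ∀ i ∈ Icc 2 q, (A i).PosSemidef) {x y z : Fin n → ℝ} {t : ℝ} (hx : x ≠ 0)
    (ht₀ : 0 ≤ t) (ht₁ : t < 1) (hy : euclNorm y ≤ t * euclNorm x)
    (hz : euclNorm z ≤ t * euclNorm x) :
    qrho q A α γ ρ (t • x) y z < qrho q A α γ ρ x y z := by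
  have ht : t ^ 2 ≤ 1 := by nlinarith
  have h₁ : α * qf (A 1) (t • x) ≤ α * qf (A 1) x := by gcongr; exact qf_smul_le hA₁ ht x
  have h₂ : γ * ∑ i ∈ Icc 2 q, qf (A i) z * qf (A i) (t • x)
      ≤ γ * ∑ i ∈ Icc 2 q, qf (A i) z * qf (A i) x := by
    gcongr with i hi
    · exact (hA i hi).dotProduct_mulVec_nonneg z
    · exact qf_smul_le (hA i hi) ht x
  have hdy := sqnorm_smul_sub_lt hx ht₁ hy
  have hdz := sqnorm_smul_sub_lt hx ht₁ hz
  have h₃ : ρ * (sqnorm (t • x - y) + sqnorm (t • x - z))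
      < ρ * (sqnorm (x - y) + sqnorm (x - z)) := by
    gcongr
  unfold qrho
  linarith

lemma qrho_smul_right_lt (hγ : 0 ≤ γ) (hρ : 0 < ρ) (hA : ∀ i ∈ Icc 2 q, (A i).PosSemidef)
    {x y z : Fin n → ℝ} {t : ℝ} (hz : z ≠ 0) (ht₀ : 0 ≤ t) (ht₁ : t < 1)
    (hx : euclNorm x ≤ t * euclNorm z) :
    qrho q A α γ ρ x y (t • z) < qrho q A α γ ρ x y z := by
  have ht : t ^ 2 ≤ 1 := by nlinarith
  have h₂ : γ * ∑ i ∈ Icc 2 q, qf (A i) (t • z) * qf (A i) x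
      ≤ γ * ∑ i ∈ Icc 2 q, qf (A i) z * qf (A i) x := by
    gcongr with i hi
    · exact (hA i hi).dotProduct_mulVec_nonneg x
    · exact qf_smul_le (hA i hi) ht z
  have hd : sqnorm (x - t • z) < sqnorm (x - z) := by
    rw [sqnorm_sub_comm x, sqnorm_sub_comm x]
    exact sqnorm_smul_sub_lt hz ht₁ hx
  have h₃ : ρ * (sqnorm (x - y) + sqnorm (x - t • z))
      < ρ * (sqnorm (x - y) + sqnorm (x - z)) := by
    gcongr
  unfold qrho
  linarith

lemma euclNorm_le_of_forall_qrho_le_left (hα : 0 ≤ α) (hγ : 0 ≤ γ) (hρ : 0 < ρ)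
    (hA₁ : (A 1).PosSemidef) (hA : ∀ i ∈ Icc 2 q, (A i).PosSemidef) {x y z : Fin n → ℝ}
    {M : ℝ} (hM : 0 ≤ M) (hy : euclNorm y ≤ M) (hz : euclNorm z ≤ M)
    (hmin : ∀ u, euclNorm u = M → qrho q A α γ ρ x y z ≤ qrho q A α γ ρ u y z) :
    euclNorm x ≤ M := by
  by_contra! hxM
  have hx₀ : 0 < euclNorm x := hM.trans_lt hxM
  set t := M / euclNorm x
  have htx : t * euclNorm x = M := div_mul_cancel₀ _ hx₀.ne'
  have ht₀ : 0 ≤ t := div_nonneg hM hx₀.le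
  have hu : euclNorm (t • x) = M := by rw [euclNorm_smul, abs_of_nonneg ht₀, htx]
  exact (hmin _ hu).not_gt <| qrho_smul_left_lt hα hγ hρ hA₁ hA (ne_zero_of_euclNorm_pos hx₀)
    ht₀ ((div_lt_one hx₀).2 hxM) (htx ▸ hy) (htx ▸ hz)

lemma euclNorm_le_of_forall_qrho_le_right (hγ : 0 ≤ γ) (hρ : 0 < ρ)
    (hA : ∀ i ∈ Icc 2 q, (A i).PosSemidef) {x y z : Fin n → ℝ}
    (hmin : ∀ w, qrho q A α γ ρ x y z ≤ qrho q A α γ ρ x y w) :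
    euclNorm z ≤ euclNorm x := by
  by_contra! hzx
  have hz₀ : 0 < euclNorm z := (euclNorm_nonneg x).trans_lt hzx
  set t := euclNorm x / euclNorm z
  have htz : t * euclNorm z = euclNorm x := div_mul_cancel₀ _ hz₀.ne'
  exact (hmin _).not_gt <| qrho_smul_right_lt hγ hρ hA (ne_zero_of_euclNorm_pos hz₀)
    (div_nonneg (euclNorm_nonneg x) hz₀.le) ((div_lt_one hz₀).2 hzx) htz.ge

end BlockSteps

theorem bcd_iterates_bounded_general {n q k : ℕ} (hn : 1 ≤ n) (hq : 2 ≤ q)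
    (A : ℕ → Matrix (Fin n) (Fin n) ℝ)
    (α γ ρ φ : ℝ) (hα : α = 0 ∨ α = 1) (hγ : 0 ≤ γ) (hρ : 0 < ρ)
    (hA0 : (A 0).PosDef) (hA : ∀ i, 1 ≤ i → i ≤ q → (A i).PosSemidef)
    (x y z : ℕ → Fin n → ℝ)
    (hy0 : euclNorm (y 0) = 1 ∧ (Function.support (y 0)).ncard ≤ k)
    (hz0 : euclNorm (z 0) ≤ 1)
    (hxmin : ∀ l : ℕ, φ ≤ qf (A 0) (x (l + 1)) ∧
      ∀ u : Fin n → ℝ, φ ≤ qf (A 0) u →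
        qrho q A α γ ρ (x (l + 1)) (y l) (z l) ≤ qrho q A α γ ρ u (y l) (z l))
    (hymin : ∀ l : ℕ,
      (euclNorm (y (l + 1)) = 1 ∧ (Function.support (y (l + 1))).ncard ≤ k) ∧
      ∀ v : Fin n → ℝ, euclNorm v = 1 → (Function.support v).ncard ≤ k →
        qrho q A α γ ρ (x (l + 1)) (y (l + 1)) (z l) ≤ qrho q A α γ ρ (x (l + 1)) v (z l))
    (hzmin : ∀ l : ℕ, ∀ w : Fin n → ℝ,
        qrho q A α γ ρ (x (l + 1)) (y (l + 1)) (z (l + 1)) ≤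
          qrho q A α γ ρ (x (l + 1)) (y (l + 1)) w) :
    ∀ l : ℕ, 1 ≤ l →
      max (max (euclNorm (x l)) (euclNorm (y l))) (euclNorm (z l)) ≤
        max (Real.sqrt (φ / smallestEigenvalue (A 0))) 1 := by
  have : NeZero n := ⟨by omega⟩
  set M := max (Real.sqrt (φ / smallestEigenvalue (A 0))) 1
  have hM₁ : 1 ≤ M := le_max_right _ _
  have hα₀ : 0 ≤ α := by rcases hα with rfl | rfl <;> norm_num
  have hA₁ : (A 1).PosSemidef := hA 1 le_rfl (by omega)
  have hA₂ : ∀ i ∈ Icc 2 q, (A i).PosSemidef := fun i hi =>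
    hA i (one_le_two.trans (mem_Icc.1 hi).1) (mem_Icc.1 hi).2
  have hfeas : ∀ u, euclNorm u = M → φ ≤ qf (A 0) u := fun u hu =>
    hA0.le_qf_of_sqrt_div_le (hu ▸ le_max_left _ _)
  have hyM : ∀ l, euclNorm (y l) ≤ M := fun
    | 0 => hy0.1 ▸ hM₁
    | l + 1 => (hymin l).1.1 ▸ hM₁
  have hxM : ∀ l, euclNorm (z l) ≤ M → euclNorm (x (l + 1)) ≤ M := fun l hz =>
    euclNorm_le_of_forall_qrho_le_left hα₀ hγ hρ hA₁ hA₂ (by linarith) (hyM l) hz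
      fun u hu => (hxmin l).2 u (hfeas u hu)
  have hzM : ∀ l, euclNorm (z l) ≤ M := fun l => by
    induction l with
    | zero => exact hz0.trans hM₁
    | succ l ih =>
      exact (euclNorm_le_of_forall_qrho_le_right hγ hρ hA₂ (hzmin l)).trans (hxM l ih)
  rintro (_ | l) hl
  · omega
  · exact max_le (max_le (hxM l (hzM l)) (hyM _)) (hzM _)

/-- Lemma 1, boundedness of the BCD iterates. -/
theorem bcd_iterates_bounded {n q k : ℕ} (hn : 1 ≤ n) (hq : 2 ≤ q)
    (A : ℕ → Matrix (Fin n) (Fin n) ℝ)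
    (α γ ρ φ : ℝ) (hα : α = 0 ∨ α = 1) (hγ : 0 ≤ γ) (hρ : 0 < ρ) (hφ : 0 < φ)
    (hA0 : (A 0).PosDef) (hA : ∀ i, 1 ≤ i → i ≤ q → (A i).PosSemidef)
    (hk1 : 1 ≤ k) (hkn : k ≤ n)
    (x y z : ℕ → Fin n → ℝ)
    (hy0 : euclNorm (y 0) = 1 ∧ (Function.support (y 0)).ncard ≤ k)
    (hz0 : euclNorm (z 0) ≤ 1)
    (hxmin : ∀ l : ℕ, φ ≤ qf (A 0) (x (l + 1)) ∧
      ∀ u : Fin n → ℝ, φ ≤ qf (A 0) u →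
        qrho q A α γ ρ (x (l + 1)) (y l) (z l) ≤ qrho q A α γ ρ u (y l) (z l))
    (hymin : ∀ l : ℕ,
      (euclNorm (y (l + 1)) = 1 ∧ (Function.support (y (l + 1))).ncard ≤ k) ∧
      ∀ v : Fin n → ℝ, euclNorm v = 1 → (Function.support v).ncard ≤ k →
        qrho q A α γ ρ (x (l + 1)) (y (l + 1)) (z l) ≤ qrho q A α γ ρ (x (l + 1)) v (z l))
    (hzmin : ∀ l : ℕ, ∀ w : Fin n → ℝ,
        qrho q A α γ ρ (x (l + 1)) (y (l + 1)) (z (l + 1)) ≤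
          qrho q A α γ ρ (x (l + 1)) (y (l + 1)) w) :
    ∀ l : ℕ, 1 ≤ l →
      max (max (euclNorm (x l)) (euclNorm (y l))) (euclNorm (z l)) ≤
        max (Real.sqrt (φ / smallestEigenvalue (A 0))) 1 :=
  bcd_iterates_bounded_general hn hq A α γ ρ φ hα hγ hρ hA0 hA x y z hy0 hz0 hxmin hymin hzmin
end

section
/- Let x ∈ ℝ^n with x ≠ 0, let 1 ≤ k ≤ n, and let L ⊆ {1,…,n} with |L| = k be such that min_{i∈L} |x_i| ≥ max_{i∉L} |x_i| (i.e., L indexes k coordinates of x that are largest in absolute value). Then x_L ≠ 0 and y* = x_L / ‖x_L‖ is a global minimizer of the function y ↦ ‖x − y‖² over the set {y ∈ ℝ^n : ‖y‖ = 1 and ‖y‖₀ ≤ k}. -/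
open Matrix Finset Filter Topology

/-- Euclidean norm on `ℝ^n`. -/
noncomputable def enorm {n : ℕ} (x : Fin n → ℝ) : ℝ := Real.sqrt (sqnorm x)

/-! Expanding the square, `‖x - y‖² = ‖x‖² - 2 ⟪x, y⟫ + 1` for every unit vector `y`, so the
minimizers are the maximizers of `⟪x, y⟫`. If `y` is supported on a set `S` with `|S| ≤ k`, then
`⟪x, y⟫ = ⟪x_S, y⟫ ≤ ‖x_S‖` by Cauchy–Schwarz, and `‖x_S‖ ≤ ‖x_L‖` because `L` carries `k` largest
entries of `|x|`. The bound `‖x_L‖` is attained at `x_L / ‖x_L‖`. -/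

namespace Finset

variable {ι M : Type*} [AddCommMonoid M] [LinearOrder M] [IsOrderedAddMonoid M] {f : ι → M}
  {s t : Finset ι}

theorem sum_le_sum_of_card_le_of_forall_le (hcard : #s ≤ #t) (hle : ∀ i ∈ s, ∀ j ∈ t, f i ≤ f j)
    (hf : ∀ j ∈ t, 0 ≤ f j) : ∑ i ∈ s, f i ≤ ∑ j ∈ t, f j := by
  rcases t.eq_empty_or_nonempty with rfl | ht
  · simp [card_eq_zero.1 (Nat.le_zero.1 hcard)]
  obtain ⟨j₀, hj₀, hmin⟩ := exists_mem_eq_inf' ht f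
  calc ∑ i ∈ s, f i ≤ #s • t.inf' ht f :=
        sum_le_card_nsmul _ _ _ fun i hi => le_inf' ht f (hle i hi)
    _ ≤ #t • t.inf' ht f := nsmul_le_nsmul_left (hmin ▸ hf j₀ hj₀) hcard
    _ ≤ ∑ j ∈ t, f j := card_nsmul_le_sum _ _ _ fun j hj => inf'_le f hj

theorem sum_le_sum_of_card_le_of_forall_notMem_le [DecidableEq ι] (hf : ∀ i, 0 ≤ f i)
    (hcard : #s ≤ #t) (hsep : ∀ i ∈ t, ∀ j ∉ t, f j ≤ f i) :
    ∑ i ∈ s, f i ≤ ∑ j ∈ t, f j := by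
  rw [← sum_inter_add_sum_sdiff s t, ← sum_inter_add_sum_sdiff t s, inter_comm]
  gcongr 1
  refine sum_le_sum_of_card_le_of_forall_le (card_sdiff_le_card_sdiff_iff.2 hcard)
    (fun i hi j hj => hsep j (mem_sdiff.1 hj).1 i (mem_sdiff.1 hi).2) fun j _ => hf j

end Finset

section Sparse

variable {n : ℕ}

theorem sqnorm_nonneg (x : Fin n → ℝ) : 0 ≤ sqnorm x :=
  sum_nonneg fun i _ => sq_nonneg (x i)

theorem sq_enorm (x : Fin n → ℝ) : _root_.enorm x ^ 2 = sqnorm x :=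
  Real.sq_sqrt (sqnorm_nonneg x)

theorem sqnorm_eq_dotProduct (x : Fin n → ℝ) : sqnorm x = x ⬝ᵥ x := by
  simp only [sqnorm, dotProduct, sq]

theorem sqnorm_sub (x y : Fin n → ℝ) : sqnorm (x - y) = sqnorm x - 2 * (x ⬝ᵥ y) + sqnorm y := by
  simp only [sqnorm_eq_dotProduct, sub_dotProduct, dotProduct_sub, dotProduct_comm y x]
  ring

theorem sqnorm_smul (c : ℝ) (x : Fin n → ℝ) : sqnorm (c • x) = c ^ 2 * sqnorm x := by
  simp only [sqnorm, Pi.smul_apply, smul_eq_mul, mul_pow, mul_sum]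

theorem sqnorm_pos {x : Fin n → ℝ} (hx : x ≠ 0) : 0 < sqnorm x := by
  obtain ⟨i, hi⟩ := Function.ne_iff.1 hx
  exact sum_pos' (fun j _ => sq_nonneg (x j)) ⟨i, mem_univ i, sq_pos_of_ne_zero hi⟩

theorem dotProduct_le_enorm_mul_enorm (x y : Fin n → ℝ) :
    x ⬝ᵥ y ≤ _root_.enorm x * _root_.enorm y :=
  Real.sum_mul_le_sqrt_mul_sqrt univ x y

theorem enorm_inv_smul_self {x : Fin n → ℝ} (hx : x ≠ 0) :
    _root_.enorm ((_root_.enorm x)⁻¹ • x) = 1 := by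
  rw [_root_.enorm, sqnorm_smul, inv_pow, sq_enorm, inv_mul_cancel₀ (sqnorm_pos hx).ne',
    Real.sqrt_one]

theorem dotProduct_inv_smul_self (x y : Fin n → ℝ) (hxy : x ⬝ᵥ y = sqnorm y) :
    x ⬝ᵥ ((_root_.enorm y)⁻¹ • y) = _root_.enorm y := by
  rw [dotProduct_smul, hxy, ← sq_enorm, smul_eq_mul]
  rcases eq_or_ne (_root_.enorm y) 0 with h | h
  · simp [h]
  · field_simp

theorem sqnorm_proj (L : Finset (Fin n)) (x : Fin n → ℝ) :
    sqnorm (proj L x) = ∑ i ∈ L, x i ^ 2 := by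
  simp only [sqnorm, proj, apply_ite (· ^ 2), ne_eq, OfNat.ofNat_ne_zero, not_false_eq_true,
    zero_pow, sum_ite_mem, univ_inter]

theorem dotProduct_proj_self (L : Finset (Fin n)) (x : Fin n → ℝ) :
    x ⬝ᵥ proj L x = sqnorm (proj L x) := by
  refine sum_congr rfl fun i _ => ?_
  by_cases hi : i ∈ L <;> simp [proj, hi, sq]

theorem proj_dotProduct_of_support_subset {L : Finset (Fin n)} {y : Fin n → ℝ}
    (hy : Function.support y ⊆ L) (x : Fin n → ℝ) : proj L x ⬝ᵥ y = x ⬝ᵥ y := by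
  refine sum_congr rfl fun i _ => ?_
  by_cases hi : i ∈ L
  · simp [proj, hi]
  · simp [proj, hi, Function.notMem_support.1 fun h => hi (hy h)]

theorem ncard_support_proj_le (L : Finset (Fin n)) (x : Fin n → ℝ) :
    (Function.support (proj L x)).ncard ≤ #L := by
  refine (Set.ncard_le_ncard ?_ L.finite_toSet).trans_eq (Set.ncard_coe_finset L)
  intro i hi
  by_contra hiL
  exact hi (if_neg hiL)

theorem proj_ne_zero {L : Finset (Fin n)} (hL : L.Nonempty) {x : Fin n → ℝ} (hx : x ≠ 0)
    (hsep : ∀ i ∈ L, ∀ j ∉ L, |x j| ≤ |x i|) : proj L x ≠ 0 := by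
  obtain ⟨j, hj⟩ := Function.ne_iff.1 hx
  obtain ⟨i, hi⟩ := hL
  intro h
  have hxL : ∀ l ∈ L, x l = 0 := fun l hl => by simpa [proj, hl] using congrFun h l
  by_cases hjL : j ∈ L
  · exact hj (hxL j hjL)
  · exact hj (abs_nonpos_iff.1 ((hsep i hi j hjL).trans_eq (by simp [hxL i hi])))

theorem enorm_proj_le {L S : Finset (Fin n)} (hcard : #S ≤ #L) (x : Fin n → ℝ)
    (hsep : ∀ i ∈ L, ∀ j ∉ L, |x j| ≤ |x i|) :
    _root_.enorm (proj S x) ≤ _root_.enorm (proj L x) := by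
  refine Real.sqrt_le_sqrt ?_
  rw [sqnorm_proj, sqnorm_proj]
  refine sum_le_sum_of_card_le_of_forall_notMem_le (fun i => sq_nonneg (x i)) hcard
    fun i hi j hj => ?_
  simpa only [sq_abs] using pow_le_pow_left₀ (abs_nonneg _) (hsep i hi j hj) 2

theorem dotProduct_le_enorm_proj {L : Finset (Fin n)} (x : Fin n → ℝ)
    (hsep : ∀ i ∈ L, ∀ j ∉ L, |x j| ≤ |x i|) {y : Fin n → ℝ} (hy : _root_.enorm y = 1)
    (hsupp : (Function.support y).ncard ≤ #L) : x ⬝ᵥ y ≤ _root_.enorm (proj L x) := by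
  set S := (Set.toFinite (Function.support y)).toFinset
  have hS : Function.support y ⊆ S := by simp [S]
  calc x ⬝ᵥ y = proj S x ⬝ᵥ y := (proj_dotProduct_of_support_subset hS x).symm
    _ ≤ _root_.enorm (proj S x) := by
        simpa [hy] using dotProduct_le_enorm_mul_enorm (proj S x) y
    _ ≤ _root_.enorm (proj L x) :=
        enorm_proj_le (by rwa [← Set.ncard_eq_toFinset_card]) x hsep

end Sparse

theorem sparsify_is_minimizer_general {n k : ℕ} (hk1 : 1 ≤ k)
    (x : Fin n → ℝ) (hx : x ≠ 0) (L : Finset (Fin n)) (hL : L.card = k)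
    (hsep : ∀ i ∈ L, ∀ j ∉ L, |x j| ≤ |x i|) :
    proj L x ≠ 0 ∧
    (_root_.enorm ((_root_.enorm (proj L x))⁻¹ • proj L x) = 1 ∧
      (Function.support ((_root_.enorm (proj L x))⁻¹ • proj L x)).ncard ≤ k) ∧
    ∀ y : Fin n → ℝ, _root_.enorm y = 1 → (Function.support y).ncard ≤ k →
      sqnorm (x - (_root_.enorm (proj L x))⁻¹ • proj L x) ≤ sqnorm (x - y) := by
  subst hL
  have hxL : proj L x ≠ 0 := proj_ne_zero (card_pos.1 hk1) hx hsep
  have hunit := enorm_inv_smul_self hxL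
  refine ⟨hxL, ⟨hunit, ?_⟩, fun y hy hsupp => ?_⟩
  · exact (Set.ncard_le_ncard (Function.support_const_smul_subset _ _) (Set.toFinite _)).trans
      (ncard_support_proj_le L x)
  · have hsq : ∀ z : Fin n → ℝ, _root_.enorm z = 1 → sqnorm z = 1 := fun z hz => by
      rw [← sq_enorm, hz, one_pow]
    rw [sqnorm_sub, sqnorm_sub, hsq _ hunit, hsq y hy,
      dotProduct_inv_smul_self x _ (dotProduct_proj_self L x)]
    linarith [dotProduct_le_enorm_proj x hsep hy hsupp]

theorem sparsify_is_minimizer {n k : ℕ} (hk1 : 1 ≤ k) (hkn : k ≤ n)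
    (x : Fin n → ℝ) (hx : x ≠ 0) (L : Finset (Fin n)) (hL : L.card = k)
    (hsep : ∀ i ∈ L, ∀ j ∉ L, |x j| ≤ |x i|) :
    proj L x ≠ 0 ∧
    (_root_.enorm ((_root_.enorm (proj L x))⁻¹ • proj L x) = 1 ∧
      (Function.support ((_root_.enorm (proj L x))⁻¹ • proj L x)).ncard ≤ k) ∧
    ∀ y : Fin n → ℝ, _root_.enorm y = 1 → (Function.support y).ncard ≤ k →
      sqnorm (x - (_root_.enorm (proj L x))⁻¹ • proj L x) ≤ sqnorm (x - y) :=
  sparsify_is_minimizer_general hk1 x hx L hL hsep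
end

section
/- Assume additionally that A₁, …, A_q are positive semidefinite. Let (x_l, y_l, z_l)_{l ≥ 0} be a BCD sequence and suppose that some subsequence of (x_l, y_l, z_l)_{l ≥ 1} converges to (x*, y*, z*). Then (x*, y*, z*) is a saddle point, i.e., x* ∈ X, y* ∈ Y, and q_ρ(x*, y*, z*) ≤ q_ρ(x, y*, z*) for all x ∈ X, q_ρ(x*, y*, z*) ≤ q_ρ(x*, y, z*) for all y ∈ Y, and q_ρ(x*, y*, z*) ≤ q_ρ(x*, y*, z) for all z ∈ ℝ^n. -/
open Matrix Finset Filter Topology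

/-!
The objective values `F (x l, y l, z l)` decrease along the iteration, and the value right after
an `x`-update is squeezed between two consecutive such values. Along the subsequence the larger
one tends to `F (x*, y*, z*)` by continuity, hence so does the smaller one by monotonicity, and
passing to the limit in the `x`-optimality of the iterates gives the `x`-condition at the limit
point. The `z`-condition passes to the limit directly, and so does the `y`-condition, because in
`q_ρ` a comparison of two values of `y` does not depend on `z`.
-/

section BlockCoordinateDescent

variable {α β γ R : Type*} [LinearOrder R]

theorem Antitone.tendsto_comp_add_one_of_tendsto_comp [TopologicalSpace R] [OrderTopology R]
    {g : ℕ → R} {τ : ℕ → ℕ} {L : R} (hg : Antitone g) (hτ : StrictMono τ)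
    (h : Tendsto (g ∘ τ) atTop (𝓝 L)) :
    Tendsto (fun j => g (τ j + 1)) atTop (𝓝 L) :=
  tendsto_of_tendsto_of_tendsto_of_le_of_le ((tendsto_add_atTop_iff_nat 1).2 h) h
    (fun j => hg (hτ j.lt_succ_self)) (fun j => hg (τ j).le_succ)

structure IsBCDSequence (F : α → β → γ → R) (X : Set α) (Y : Set β)
    (x : ℕ → α) (y : ℕ → β) (z : ℕ → γ) : Prop where
  x_mem : ∀ l, x (l + 1) ∈ X
  x_min : ∀ l, ∀ u ∈ X, F (x (l + 1)) (y l) (z l) ≤ F u (y l) (z l)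
  y_mem : ∀ l, y (l + 1) ∈ Y
  y_min : ∀ l, ∀ v ∈ Y, F (x (l + 1)) (y (l + 1)) (z l) ≤ F (x (l + 1)) v (z l)
  z_min : ∀ l w, F (x (l + 1)) (y (l + 1)) (z (l + 1)) ≤ F (x (l + 1)) (y (l + 1)) w

structure IsBlockwiseMin (F : α → β → γ → R) (X : Set α) (Y : Set β) (a : α) (b : β) (c : γ) :
    Prop where
  mem_X : a ∈ X
  min_x : ∀ u ∈ X, F a b c ≤ F u b c
  mem_Y : b ∈ Y
  min_y : ∀ v ∈ Y, F a b c ≤ F a v c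
  min_z : ∀ w, F a b c ≤ F a b w

namespace IsBCDSequence

variable {F : α → β → γ → R} {X : Set α} {Y : Set β} {x : ℕ → α} {y : ℕ → β} {z : ℕ → γ}

theorem value_succ_le_after_x_step (hbcd : IsBCDSequence F X Y x y z) (l : ℕ) :
    F (x (l + 2)) (y (l + 2)) (z (l + 2)) ≤ F (x (l + 2)) (y (l + 1)) (z (l + 1)) :=
  (hbcd.z_min (l + 1) (z (l + 1))).trans (hbcd.y_min (l + 1) _ (hbcd.y_mem l))

theorem after_x_step_le_value (hbcd : IsBCDSequence F X Y x y z) (l : ℕ) :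
    F (x (l + 2)) (y (l + 1)) (z (l + 1)) ≤ F (x (l + 1)) (y (l + 1)) (z (l + 1)) :=
  hbcd.x_min (l + 1) _ (hbcd.x_mem l)

theorem antitone_value (hbcd : IsBCDSequence F X Y x y z) :
    Antitone fun l => F (x (l + 1)) (y (l + 1)) (z (l + 1)) :=
  antitone_nat_of_succ_le fun l =>
    (hbcd.value_succ_le_after_x_step l).trans (hbcd.after_x_step_le_value l)

variable [TopologicalSpace R] [OrderTopology R] [TopologicalSpace α] [TopologicalSpace β]
  [TopologicalSpace γ]

theorem isBlockwiseMin_of_tendsto (hbcd : IsBCDSequence F X Y x y z)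
    (hF : Continuous fun p : α × β × γ => F p.1 p.2.1 p.2.2) (hX : IsClosed X) (hY : IsClosed Y)
    (hy_indep : ∀ a b b' c c', F a b c ≤ F a b' c → F a b c' ≤ F a b' c')
    {τ : ℕ → ℕ} (hτ : StrictMono τ) {a : α} {b : β} {c : γ}
    (hx : Tendsto (fun j => x (τ j + 1)) atTop (𝓝 a))
    (hy : Tendsto (fun j => y (τ j + 1)) atTop (𝓝 b))
    (hz : Tendsto (fun j => z (τ j + 1)) atTop (𝓝 c)) :
    IsBlockwiseMin F X Y a b c := by
  have hlim {u : ℕ → α} {v : ℕ → β} {w : ℕ → γ} {a' b' c'} (hu : Tendsto u atTop (𝓝 a'))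
      (hv : Tendsto v atTop (𝓝 b')) (hw : Tendsto w atTop (𝓝 c')) :
      Tendsto (fun j => F (u j) (v j) (w j)) atTop (𝓝 (F a' b' c')) :=
    (hF.tendsto _).comp (hu.prodMk_nhds (hv.prodMk_nhds hw))
  have hvalue := hlim hx hy hz
  have hafter_x : Tendsto (fun j => F (x (τ j + 2)) (y (τ j + 1)) (z (τ j + 1))) atTop
      (𝓝 (F a b c)) :=
    tendsto_of_tendsto_of_tendsto_of_le_of_le
      (hbcd.antitone_value.tendsto_comp_add_one_of_tendsto_comp hτ hvalue) hvalue
      (fun j => hbcd.value_succ_le_after_x_step (τ j))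
      (fun j => hbcd.after_x_step_le_value (τ j))
  exact
    { mem_X := hX.mem_of_tendsto hx (.of_forall fun j => hbcd.x_mem (τ j))
      min_x := fun u hu => le_of_tendsto_of_tendsto' hafter_x (hlim tendsto_const_nhds hy hz)
        fun j => hbcd.x_min (τ j + 1) u hu
      mem_Y := hY.mem_of_tendsto hy (.of_forall fun j => hbcd.y_mem (τ j))
      min_y := fun v hv => le_of_tendsto_of_tendsto' hvalue (hlim hx tendsto_const_nhds hz)
        fun j => hy_indep _ _ _ _ _ (hbcd.y_min (τ j) v hv)
      min_z := fun w => le_of_tendsto_of_tendsto' hvalue (hlim hx hy tendsto_const_nhds)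
        fun j => hbcd.z_min (τ j) w }

end IsBCDSequence

end BlockCoordinateDescent

theorem isClosed_setOf_ncard_support_le {ι M : Type*} [Finite ι] [TopologicalSpace M] [T1Space M]
    [Zero M] (k : ℕ) : IsClosed {v : ι → M | (Function.support v).ncard ≤ k} := by
  refine isOpen_compl_iff.1 (isOpen_iff_eventually.2 fun v hv => ?_)
  have hnear : ∀ᶠ w in 𝓝 v, ∀ i ∈ Function.support v, w i ≠ 0 :=
    (Set.toFinite _).eventually_all.2 fun i hi => (continuous_apply i).continuousAt.eventually_ne hi
  filter_upwards [hnear] with w hw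
  exact fun hwk => hv ((Set.ncard_le_ncard (fun i hi => hw i hi) (Set.toFinite _)).trans hwk)

@[fun_prop]
theorem continuous_sqnorm {n : ℕ} : Continuous (sqnorm (n := n)) := by
  unfold sqnorm; fun_prop

@[fun_prop]
theorem continuous_qf {n : ℕ} (M : Matrix (Fin n) (Fin n) ℝ) : Continuous (qf M) := by
  unfold qf Matrix.mulVec dotProduct; fun_prop

theorem continuous_qrho {n : ℕ} (q : ℕ) (A : ℕ → Matrix (Fin n) (Fin n) ℝ) (α γ ρ : ℝ) :
    Continuous fun p : (Fin n → ℝ) × (Fin n → ℝ) × (Fin n → ℝ) =>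
      qrho q A α γ ρ p.1 p.2.1 p.2.2 := by
  unfold qrho; fun_prop

theorem qrho_sub_qrho_eq {n : ℕ} (q : ℕ) (A : ℕ → Matrix (Fin n) (Fin n) ℝ) (α γ ρ : ℝ)
    (x y v z : Fin n → ℝ) :
    qrho q A α γ ρ x y z - qrho q A α γ ρ x v z = ρ * sqnorm (x - y) - ρ * sqnorm (x - v) := by
  unfold qrho; ring

theorem bcd_accumulation_point_is_saddle_general {n q k : ℕ}
    (A : ℕ → Matrix (Fin n) (Fin n) ℝ)
    (α γ ρ φ : ℝ)
    (x y z : ℕ → Fin n → ℝ)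
    (hxmin : ∀ l : ℕ, φ ≤ qf (A 0) (x (l + 1)) ∧
      ∀ u : Fin n → ℝ, φ ≤ qf (A 0) u →
        qrho q A α γ ρ (x (l + 1)) (y l) (z l) ≤ qrho q A α γ ρ u (y l) (z l))
    (hymin : ∀ l : ℕ,
      (_root_.enorm (y (l + 1)) = 1 ∧ (Function.support (y (l + 1))).ncard ≤ k) ∧
      ∀ v : Fin n → ℝ, _root_.enorm v = 1 → (Function.support v).ncard ≤ k →
        qrho q A α γ ρ (x (l + 1)) (y (l + 1)) (z l) ≤ qrho q A α γ ρ (x (l + 1)) v (z l))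
    (hzmin : ∀ l : ℕ, ∀ w : Fin n → ℝ,
        qrho q A α γ ρ (x (l + 1)) (y (l + 1)) (z (l + 1)) ≤
          qrho q A α γ ρ (x (l + 1)) (y (l + 1)) w)
    (σ : ℕ → ℕ) (hσ : StrictMono σ) (hσ1 : ∀ j, 1 ≤ σ j)
    (xs ys zs : Fin n → ℝ)
    (hxs : Filter.Tendsto (fun j => x (σ j)) Filter.atTop (𝓝 xs))
    (hys : Filter.Tendsto (fun j => y (σ j)) Filter.atTop (𝓝 ys))
    (hzs : Filter.Tendsto (fun j => z (σ j)) Filter.atTop (𝓝 zs)) :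
    (φ ≤ qf (A 0) xs ∧
      ∀ u : Fin n → ℝ, φ ≤ qf (A 0) u →
        qrho q A α γ ρ xs ys zs ≤ qrho q A α γ ρ u ys zs) ∧
    ((_root_.enorm ys = 1 ∧ (Function.support ys).ncard ≤ k) ∧
      ∀ v : Fin n → ℝ, _root_.enorm v = 1 → (Function.support v).ncard ≤ k →
        qrho q A α γ ρ xs ys zs ≤ qrho q A α γ ρ xs v zs) ∧
    (∀ w : Fin n → ℝ, qrho q A α γ ρ xs ys zs ≤ qrho q A α γ ρ xs ys w) := by
  have hbcd : IsBCDSequence (qrho q A α γ ρ) {u | φ ≤ qf (A 0) u}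
      {v | _root_.enorm v = 1 ∧ (Function.support v).ncard ≤ k} x y z :=
    { x_mem := fun l => (hxmin l).1
      x_min := fun l => (hxmin l).2
      y_mem := fun l => (hymin l).1
      y_min := fun l v hv => (hymin l).2 v hv.1 hv.2
      z_min := hzmin }
  have hX : IsClosed {u | φ ≤ qf (A 0) u} := isClosed_le continuous_const (continuous_qf _)
  have hY : IsClosed {v | _root_.enorm v = 1 ∧ (Function.support v).ncard ≤ k} :=
    (isClosed_eq (Real.continuous_sqrt.comp (continuous_sqnorm (n := n))) continuous_const).inter
      (isClosed_setOf_ncard_support_le k)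
  obtain ⟨τ, hτ, rfl⟩ : ∃ τ : ℕ → ℕ, StrictMono τ ∧ σ = fun j => τ j + 1 :=
    ⟨fun j => σ j - 1, fun _ _ hij => Nat.sub_lt_sub_right (hσ1 _) (hσ hij),
      funext fun j => (Nat.sub_add_cancel (hσ1 j)).symm⟩
  have hmin := hbcd.isBlockwiseMin_of_tendsto (continuous_qrho q A α γ ρ) hX hY
    (fun a b b' c c' h => by
      linarith [qrho_sub_qrho_eq q A α γ ρ a b b' c, qrho_sub_qrho_eq q A α γ ρ a b b' c'])
    hτ hxs hys hzs
  exact ⟨⟨hmin.mem_X, hmin.min_x⟩, ⟨hmin.mem_Y, fun v h1 h2 => hmin.min_y v ⟨h1, h2⟩⟩, hmin.min_z⟩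

theorem bcd_accumulation_point_is_saddle {n q k : ℕ} (hn : 1 ≤ n) (hq : 2 ≤ q)
    (A : ℕ → Matrix (Fin n) (Fin n) ℝ)
    (α γ ρ φ : ℝ) (hα : α = 0 ∨ α = 1) (hγ : 0 ≤ γ) (hρ : 0 < ρ) (hφ : 0 < φ)
    (hA0 : (A 0).PosDef)
    (hk1 : 1 ≤ k) (hkn : k ≤ n)
    (x y z : ℕ → Fin n → ℝ)
    (hy0 : _root_.enorm (y 0) = 1 ∧ (Function.support (y 0)).ncard ≤ k)
    (hxmin : ∀ l : ℕ, φ ≤ qf (A 0) (x (l + 1)) ∧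
      ∀ u : Fin n → ℝ, φ ≤ qf (A 0) u →
        qrho q A α γ ρ (x (l + 1)) (y l) (z l) ≤ qrho q A α γ ρ u (y l) (z l))
    (hymin : ∀ l : ℕ,
      (_root_.enorm (y (l + 1)) = 1 ∧ (Function.support (y (l + 1))).ncard ≤ k) ∧
      ∀ v : Fin n → ℝ, _root_.enorm v = 1 → (Function.support v).ncard ≤ k →
        qrho q A α γ ρ (x (l + 1)) (y (l + 1)) (z l) ≤ qrho q A α γ ρ (x (l + 1)) v (z l))
    (hzmin : ∀ l : ℕ, ∀ w : Fin n → ℝ,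
        qrho q A α γ ρ (x (l + 1)) (y (l + 1)) (z (l + 1)) ≤
          qrho q A α γ ρ (x (l + 1)) (y (l + 1)) w)
    (hApsd : ∀ i, 1 ≤ i → i ≤ q → (A i).PosSemidef)
    (σ : ℕ → ℕ) (hσ : StrictMono σ) (hσ1 : ∀ j, 1 ≤ σ j)
    (xs ys zs : Fin n → ℝ)
    (hxs : Filter.Tendsto (fun j => x (σ j)) Filter.atTop (𝓝 xs))
    (hys : Filter.Tendsto (fun j => y (σ j)) Filter.atTop (𝓝 ys))
    (hzs : Filter.Tendsto (fun j => z (σ j)) Filter.atTop (𝓝 zs)) :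
    (φ ≤ qf (A 0) xs ∧
      ∀ u : Fin n → ℝ, φ ≤ qf (A 0) u →
        qrho q A α γ ρ xs ys zs ≤ qrho q A α γ ρ u ys zs) ∧
    ((_root_.enorm ys = 1 ∧ (Function.support ys).ncard ≤ k) ∧
      ∀ v : Fin n → ℝ, _root_.enorm v = 1 → (Function.support v).ncard ≤ k →
        qrho q A α γ ρ xs ys zs ≤ qrho q A α γ ρ xs v zs) ∧
    (∀ w : Fin n → ℝ, qrho q A α γ ρ xs ys zs ≤ qrho q A α γ ρ xs ys w) :=
  bcd_accumulation_point_is_saddle_general A α γ ρ φ x y z hxmin hymin hzmin σ hσ hσ1 xs ys zs hxs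
    hys hzs
end

section
/- Let (x_l, y_l, z_l)_{l ≥ 0} be a BCD sequence. If q_ρ(x_r, y_r, z_r) = q_ρ(x_{r+1}, y_{r+1}, z_{r+1}) for some r ≥ 1, then (x_r, y_r, z_r) is a saddle point, i.e., x_r minimizes q_ρ(·, y_r, z_r) over X, y_r minimizes q_ρ(x_r, ·, z_r) over Y, and z_r minimizes q_ρ(x_r, y_r, ·) over ℝ^n. -/
open Matrix Finset Filter Topology

/-- Euclidean norm on `ℝ^n`. -/
noncomputable def eucNorm {n : ℕ} (x : Fin n → ℝ) : ℝ := Real.sqrt (sqnorm x)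

/-! If one BCD sweep `(x_r, y_r, z_r) ↦ (x_{r+1}, y_{r+1}, z_{r+1})` does not decrease the
objective, each of its three partial minimizations is an equality. The first one says that `x_r`
already minimizes in `x`; `y_r` and `z_r` minimize by construction, since `y_r` was chosen against
`z_{r-1}` rather than `z_r`, which is harmless because differences of the objective in `y` do not
depend on `z`. -/

section BlockCoordinateDescent

variable {U V W : Type*} (f : U → V → W → ℝ) (X : Set U) (Y : Set V)

def IsBCDSequence_s7 (x : ℕ → U) (y : ℕ → V) (z : ℕ → W) : Prop :=
  ∀ l, (x (l + 1) ∈ X ∧ IsMinOn (fun u => f u (y l) (z l)) X (x (l + 1))) ∧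
    (y (l + 1) ∈ Y ∧ IsMinOn (fun v => f (x (l + 1)) v (z l)) Y (y (l + 1))) ∧
    IsMinOn (fun w => f (x (l + 1)) (y (l + 1)) w) Set.univ (z (l + 1))

def IsBlockSaddlePoint (a : U) (b : V) (c : W) : Prop :=
  (a ∈ X ∧ IsMinOn (fun u => f u b c) X a) ∧
    (b ∈ Y ∧ IsMinOn (fun v => f a v c) Y b) ∧
    IsMinOn (fun w => f a b w) Set.univ c

variable {f X Y}

theorem IsBCDSequence_s7.isBlockSaddlePoint_of_eq {x : ℕ → U} {y : ℕ → V} {z : ℕ → W}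
    (hbcd : IsBCDSequence_s7 f X Y x y z)
    (hsep : ∀ a b b' c c', f a b c - f a b' c = f a b c' - f a b' c')
    {r : ℕ} (hr : 1 ≤ r) (heq : f (x r) (y r) (z r) = f (x (r + 1)) (y (r + 1)) (z (r + 1))) :
    IsBlockSaddlePoint f X Y (x r) (y r) (z r) := by
  obtain ⟨m, rfl⟩ : ∃ m, r = m + 1 := ⟨r - 1, by omega⟩
  obtain ⟨⟨hxX, -⟩, ⟨hyY, hymin⟩, hzmin⟩ := hbcd m
  obtain ⟨⟨-, hxmin'⟩, ⟨-, hymin'⟩, hzmin'⟩ := hbcd (m + 1)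
  have hsweep : f (x (m + 1)) (y (m + 1)) (z (m + 1)) ≤ f (x (m + 2)) (y (m + 1)) (z (m + 1)) :=
    calc f (x (m + 1)) (y (m + 1)) (z (m + 1))
        = f (x (m + 2)) (y (m + 2)) (z (m + 2)) := heq
      _ ≤ f (x (m + 2)) (y (m + 2)) (z (m + 1)) := hzmin' (Set.mem_univ _)
      _ ≤ f (x (m + 2)) (y (m + 1)) (z (m + 1)) := hymin' hyY
  refine ⟨⟨hxX, fun u hu => hsweep.trans (hxmin' hu)⟩, ⟨hyY, fun v hv => ?_⟩, hzmin⟩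
  have hv' : f (x (m + 1)) (y (m + 1)) (z m) ≤ f (x (m + 1)) v (z m) := hymin hv
  have := hsep (x (m + 1)) (y (m + 1)) v (z (m + 1)) (z m)
  show f (x (m + 1)) (y (m + 1)) (z (m + 1)) ≤ f (x (m + 1)) v (z (m + 1))
  linarith

end BlockCoordinateDescent

theorem qrho_sub_qrho_eq_sqnorm_sub {n : ℕ} (q : ℕ) (A : ℕ → Matrix (Fin n) (Fin n) ℝ)
    (α γ ρ : ℝ) (x y v z : Fin n → ℝ) :
    qrho q A α γ ρ x y z - qrho q A α γ ρ x v z = ρ * (sqnorm (x - y) - sqnorm (x - v)) := by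
  simp only [qrho]
  ring

theorem bcd_equal_values_saddle_general {n q k : ℕ}
    (A : ℕ → Matrix (Fin n) (Fin n) ℝ)
    (α γ ρ φ : ℝ)
    (x y z : ℕ → Fin n → ℝ)
    (hxmin : ∀ l : ℕ, φ ≤ qf (A 0) (x (l + 1)) ∧
      ∀ u : Fin n → ℝ, φ ≤ qf (A 0) u →
        qrho q A α γ ρ (x (l + 1)) (y l) (z l) ≤ qrho q A α γ ρ u (y l) (z l))
    (hymin : ∀ l : ℕ,
      (eucNorm (y (l + 1)) = 1 ∧ (Function.support (y (l + 1))).ncard ≤ k) ∧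
      ∀ v : Fin n → ℝ, eucNorm v = 1 → (Function.support v).ncard ≤ k →
        qrho q A α γ ρ (x (l + 1)) (y (l + 1)) (z l) ≤ qrho q A α γ ρ (x (l + 1)) v (z l))
    (hzmin : ∀ l : ℕ, ∀ w : Fin n → ℝ,
        qrho q A α γ ρ (x (l + 1)) (y (l + 1)) (z (l + 1)) ≤
          qrho q A α γ ρ (x (l + 1)) (y (l + 1)) w)
    (r : ℕ) (hr : 1 ≤ r)
    (heq : qrho q A α γ ρ (x r) (y r) (z r) =
      qrho q A α γ ρ (x (r + 1)) (y (r + 1)) (z (r + 1))) :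
    (φ ≤ qf (A 0) (x r) ∧
      ∀ u : Fin n → ℝ, φ ≤ qf (A 0) u →
        qrho q A α γ ρ (x r) (y r) (z r) ≤ qrho q A α γ ρ u (y r) (z r)) ∧
    ((eucNorm (y r) = 1 ∧ (Function.support (y r)).ncard ≤ k) ∧
      ∀ v : Fin n → ℝ, eucNorm v = 1 → (Function.support v).ncard ≤ k →
        qrho q A α γ ρ (x r) (y r) (z r) ≤ qrho q A α γ ρ (x r) v (z r)) ∧
    (∀ w : Fin n → ℝ,
      qrho q A α γ ρ (x r) (y r) (z r) ≤ qrho q A α γ ρ (x r) (y r) w) := by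
  have hbcd : IsBCDSequence_s7 (qrho q A α γ ρ) {u | φ ≤ qf (A 0) u}
      {v | eucNorm v = 1 ∧ (Function.support v).ncard ≤ k} x y z := fun l =>
    ⟨hxmin l, ⟨(hymin l).1, fun v hv => (hymin l).2 v hv.1 hv.2⟩, fun w _ => hzmin l w⟩
  obtain ⟨hx, ⟨hyY, hy⟩, hz⟩ := hbcd.isBlockSaddlePoint_of_eq
    (fun a b b' c c' => by simp only [qrho_sub_qrho_eq_sqnorm_sub]) hr heq
  exact ⟨hx, ⟨hyY, fun v hv₁ hv₂ => hy ⟨hv₁, hv₂⟩⟩, fun w => hz (Set.mem_univ w)⟩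

theorem bcd_equal_values_saddle {n q k : ℕ} (hn : 1 ≤ n) (hq : 2 ≤ q)
    (A : ℕ → Matrix (Fin n) (Fin n) ℝ)
    (α γ ρ φ : ℝ) (hα : α = 0 ∨ α = 1) (hγ : 0 ≤ γ) (hρ : 0 < ρ) (hφ : 0 < φ)
    (hA0 : (A 0).PosDef)
    (hk1 : 1 ≤ k) (hkn : k ≤ n)
    (x y z : ℕ → Fin n → ℝ)
    (hy0 : eucNorm (y 0) = 1 ∧ (Function.support (y 0)).ncard ≤ k)
    (hxmin : ∀ l : ℕ, φ ≤ qf (A 0) (x (l + 1)) ∧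
      ∀ u : Fin n → ℝ, φ ≤ qf (A 0) u →
        qrho q A α γ ρ (x (l + 1)) (y l) (z l) ≤ qrho q A α γ ρ u (y l) (z l))
    (hymin : ∀ l : ℕ,
      (eucNorm (y (l + 1)) = 1 ∧ (Function.support (y (l + 1))).ncard ≤ k) ∧
      ∀ v : Fin n → ℝ, eucNorm v = 1 → (Function.support v).ncard ≤ k →
        qrho q A α γ ρ (x (l + 1)) (y (l + 1)) (z l) ≤ qrho q A α γ ρ (x (l + 1)) v (z l))
    (hzmin : ∀ l : ℕ, ∀ w : Fin n → ℝ,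
        qrho q A α γ ρ (x (l + 1)) (y (l + 1)) (z (l + 1)) ≤
          qrho q A α γ ρ (x (l + 1)) (y (l + 1)) w)
    (hAsymm : ∀ i, 1 ≤ i → i ≤ q → (A i).IsHermitian)
    (r : ℕ) (hr : 1 ≤ r)
    (heq : qrho q A α γ ρ (x r) (y r) (z r) =
      qrho q A α γ ρ (x (r + 1)) (y (r + 1)) (z (r + 1))) :
    (φ ≤ qf (A 0) (x r) ∧
      ∀ u : Fin n → ℝ, φ ≤ qf (A 0) u →
        qrho q A α γ ρ (x r) (y r) (z r) ≤ qrho q A α γ ρ u (y r) (z r)) ∧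
    ((eucNorm (y r) = 1 ∧ (Function.support (y r)).ncard ≤ k) ∧
      ∀ v : Fin n → ℝ, eucNorm v = 1 → (Function.support v).ncard ≤ k →
        qrho q A α γ ρ (x r) (y r) (z r) ≤ qrho q A α γ ρ (x r) v (z r)) ∧
    (∀ w : Fin n → ℝ,
      qrho q A α γ ρ (x r) (y r) (z r) ≤ qrho q A α γ ρ (x r) (y r) w) :=
  bcd_equal_values_saddle_general A α γ ρ φ x y z hxmin hymin hzmin r hr heq
end

section
/- Let A₀ be any real n×n matrix, x* ∈ ℝ^n, and L ⊆ {1,…,n} such that x*_L ≠ 0 and x*_i = 0 for all i ∉ L. Then the map from ℝ^n × ℝ to ℝ × ℝ × ℝ^{Lᶜ} sending (d, v) to (−2 dᵀA₀x* − v, 2 dᵀx*, (d_i)_{i∉L}) is surjective; i.e., Robinson's condition in the inactive case (case (i)) holds at x*. -/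
/-!
Since `xs` vanishes off `L`, it equals `proj L xs ≠ 0`. Prescribe `d` off `L` by `c`, then move it
along `xs`: this leaves the coordinates off `L` unchanged and sweeps `dᵀ xs` over all of `ℝ`.
The free scalar `v` absorbs the first component.
-/

open Matrix Finset Filter Topology

theorem proj_eq_self {n : ℕ} {L : Finset (Fin n)} {x : Fin n → ℝ}
    (h : ∀ i ∉ L, x i = 0) : proj L x = x := by
  ext i
  by_cases hi : i ∈ L <;> simp [proj, hi, h]

theorem exists_add_smul_dotProduct_eq {ι R : Type*} [Fintype ι] [Field R] [LinearOrder R]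
    [IsStrictOrderedRing R] {x : ι → R} (hx : x ≠ 0) (e : ι → R) (r : R) :
    ∃ t : R, (e + t • x) ⬝ᵥ x = r := by
  have hxx : x ⬝ᵥ x ≠ 0 := mt dotProduct_self_eq_zero.mp hx
  refine ⟨(r - e ⬝ᵥ x) / (x ⬝ᵥ x), ?_⟩
  rw [add_dotProduct, smul_dotProduct, smul_eq_mul, div_mul_cancel₀ _ hxx]
  ring

/-- Robinson's condition, inactive case, always holds. -/
theorem robinson_inactive_always_holds {n : ℕ} (A : Matrix (Fin n) (Fin n) ℝ)
    (xs : Fin n → ℝ) (L : Finset (Fin n))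
    (hLne : proj L xs ≠ 0) (hzero : ∀ i ∉ L, xs i = 0) :
    ∀ (a b : ℝ) (c : {i : Fin n // i ∉ L} → ℝ),
      ∃ (d : Fin n → ℝ) (v : ℝ),
        -2 * (d ⬝ᵥ A.mulVec xs) - v = a ∧
        2 * (d ⬝ᵥ xs) = b ∧
        ∀ (i : Fin n) (hi : i ∉ L), d i = c ⟨i, hi⟩ := by
  intro a b c
  have hxs : xs ≠ 0 := proj_eq_self hzero ▸ hLne
  obtain ⟨t, ht⟩ := exists_add_smul_dotProduct_eq hxs
    (fun i => if h : i ∈ L then 0 else c ⟨i, h⟩) (b / 2)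
  refine ⟨_, -2 * (_ ⬝ᵥ A.mulVec xs) - a, by ring, by rw [ht]; ring, fun i hi => ?_⟩
  simp [hi, hzero i hi]
end

section
/- Let A₀ be a real n×n matrix, L ⊆ {1,…,n}, and x* ∈ ℝ^n with ‖x*‖ = 1 and x*_i = 0 for all i ∉ L. Then the following are equivalent: (1) for every (a, b, c) ∈ ℝ × ℝ × ℝ^{Lᶜ} there exist d ∈ ℝ^n and v ≤ 0 such that −2 dᵀA₀x* − v = a, 2 dᵀx* = b, and d_i = c_i for all i ∉ L (Robinson's condition in the active case, case (ii)); (2) the set {(A₀x*)_L, x*_L} is linearly independent in ℝ^n. -/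
open Matrix Finset Filter Topology

/-!
Write `u = (A₀x*)_L` and `w = x*_L`. A vector `d` with `d_i = c_i` off `L` splits as `d = y_L + e`,
where `e` is `c` extended by zero; then `dᵀA₀x* = yᵀu + eᵀA₀x*` and `dᵀx* = yᵀw + eᵀx*`, so the
condition asks for the map `y ↦ (yᵀu, yᵀw)` to reach enough of `ℝ²`. If `u, w` are independent this
map is onto and one may take `v = 0`. Conversely, the right-hand sides `(a, b) = (-1, 0)` and `(0, 2)`
produce `d` with `dᵀu ≥ 1/2, dᵀw = 0` and `d'` with `d'ᵀw = 1`, which rules out any relation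
`s u + t w = 0` other than the trivial one.
-/

theorem Matrix.mulVec_surjective_iff {m n K : Type*} [Finite m] [Fintype n] [Field K]
    {M : Matrix m n K} : Function.Surjective M.mulVec ↔ LinearIndependent K M.row := by
  rw [← Matrix.coe_mulVecLin, ← LinearMap.range_eq_top, Matrix.range_mulVecLin]
  exact span_flip_eq_top_iff_linearIndependent

theorem LinearIndependent.exists_dotProduct_eq_pair {n K : Type*} [Fintype n] [Field K]
    {u w : n → K} (h : LinearIndependent K ![u, w]) (p q : K) :
    ∃ y : n → K, y ⬝ᵥ u = p ∧ y ⬝ᵥ w = q := by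
  obtain ⟨y, hy⟩ := Matrix.mulVec_surjective_iff (M := Matrix.of ![u, w]).mpr h ![p, q]
  refine ⟨y, ?_, ?_⟩
  · simpa [dotProduct_comm] using congrFun hy 0
  · simpa [dotProduct_comm] using congrFun hy 1

theorem linearIndependent_pair_of_dotProduct {n K : Type*} [Fintype n] [Field K]
    {u w d d' : n → K} (hu : d ⬝ᵥ u ≠ 0) (hw : d ⬝ᵥ w = 0) (hw' : d' ⬝ᵥ w ≠ 0) :
    LinearIndependent K ![u, w] := by
  refine LinearIndependent.pair_iff.mpr fun s t hst => ?_
  have hs : s = 0 := by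
    simpa [hw, hu] using congrArg (d ⬝ᵥ ·) hst
  subst hs
  have ht : t * (d' ⬝ᵥ w) = 0 := by
    simpa using congrArg (d' ⬝ᵥ ·) hst
  exact ⟨rfl, (mul_eq_zero.mp ht).resolve_right hw'⟩

section proj

variable {n : ℕ} (L : Finset (Fin n))

theorem proj_dotProduct (x y : Fin n → ℝ) : proj L x ⬝ᵥ y = x ⬝ᵥ proj L y := by
  refine Finset.sum_congr rfl fun i _ => ?_
  by_cases hi : i ∈ L <;> simp [proj, hi]

theorem dotProduct_proj_of_forall_notMem {d : Fin n → ℝ} (hd : ∀ i ∉ L, d i = 0)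
    (x : Fin n → ℝ) : d ⬝ᵥ x = d ⬝ᵥ proj L x := by
  refine Finset.sum_congr rfl fun i _ => ?_
  by_cases hi : i ∈ L <;> simp [proj, hi, hd]

end proj

theorem robinson_active_iff_linearIndependent_general {n : ℕ}
    (A : Matrix (Fin n) (Fin n) ℝ) (L : Finset (Fin n)) (xs : Fin n → ℝ) :
    (∀ (a b : ℝ) (c : {i : Fin n // i ∉ L} → ℝ),
      ∃ (d : Fin n → ℝ) (v : ℝ), v ≤ 0 ∧
        -2 * (d ⬝ᵥ A.mulVec xs) - v = a ∧
        2 * (d ⬝ᵥ xs) = b ∧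
        ∀ (i : Fin n) (hi : i ∉ L), d i = c ⟨i, hi⟩) ↔
    LinearIndependent ℝ ![proj L (A.mulVec xs), proj L xs] := by
  constructor
  · intro hcond
    obtain ⟨d, v, hv, hda, hdb, hdc⟩ := hcond (-1) 0 0
    obtain ⟨d', -, -, -, hd'b, hd'c⟩ := hcond 0 2 0
    rw [dotProduct_proj_of_forall_notMem L hdc] at hda hdb
    rw [dotProduct_proj_of_forall_notMem L hd'c] at hd'b
    exact linearIndependent_pair_of_dotProduct (d := d) (d' := d')
      (by linarith) (by linarith) (by linarith)
  · intro hli a b c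
    let e : Fin n → ℝ := fun i => if h : i ∈ L then 0 else c ⟨i, h⟩
    obtain ⟨y, hyu, hyw⟩ := hli.exists_dotProduct_eq_pair
      (-(a + 2 * (e ⬝ᵥ A.mulVec xs)) / 2) (b / 2 - e ⬝ᵥ xs)
    refine ⟨proj L y + e, 0, le_rfl, ?_, ?_, fun i hi => by simp [proj, e, hi]⟩
    · rw [add_dotProduct, proj_dotProduct, hyu]
      ring
    · rw [add_dotProduct, proj_dotProduct, hyw]
      ring

/-- Robinson's condition, active case, iff linear independence. -/
theorem robinson_active_iff_linearIndependent {n : ℕ}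
    (A : Matrix (Fin n) (Fin n) ℝ) (L : Finset (Fin n)) (xs : Fin n → ℝ)
    (hnorm : eucNorm xs = 1) (hzero : ∀ i ∉ L, xs i = 0) :
    (∀ (a b : ℝ) (c : {i : Fin n // i ∉ L} → ℝ),
      ∃ (d : Fin n → ℝ) (v : ℝ), v ≤ 0 ∧
        -2 * (d ⬝ᵥ A.mulVec xs) - v = a ∧
        2 * (d ⬝ᵥ xs) = b ∧
        ∀ (i : Fin n) (hi : i ∉ L), d i = c ⟨i, hi⟩) ↔
    LinearIndependent ℝ ![proj L (A.mulVec xs), proj L xs] :=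
  robinson_active_iff_linearIndependent_general A L xs
end
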